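/- For all integers k ≥ 2, ρ ≥ 1 and v ≥ kρ, β(ρ,v,k) ≤ ρ·(k²(ρ−1)/2 + 1 + max{k(k−1), ⌊(v−kρ)/(k−1)⌋}). -/

import Mathlib

/-- A `(v,k)`-packing: a family of `k`-subsets of a `v`-set such that
every pair of points occurs in at most one block. -/
def IsPacking (v k : ℕ) (B : Finset (Finset (Fin v))) : Prop :=
  (∀ b ∈ B, b.card = k) ∧
    ∀ b₁ ∈ B, ∀ b₂ ∈ B, b₁ ≠ b₂ → (b₁ ∩ b₂).card ≤ 1

/-- A partial parallel class: a set of pairwise disjoint blocks of the packing. -/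
def IsPPC {v : ℕ} (B P : Finset (Finset (Fin v))) : Prop :=
  P ⊆ B ∧ ∀ b₁ ∈ P, ∀ b₂ ∈ P, b₁ ≠ b₂ → Disjoint b₁ b₂

/-- The maximum PPC of `B` has size `ρ`. -/
def MaxPPCSize {v : ℕ} (B : Finset (Finset (Fin v))) (ρ : ℕ) : Prop :=
  (∃ P, IsPPC B P ∧ P.card = ρ) ∧ ∀ P, IsPPC B P → P.card ≤ ρ

/-- `β(ρ,v,k)`: the maximum number of blocks in a `(v,k)`-packing whose
maximum partial parallel class has size `ρ`. -/
noncomputable def beta (ρ v k : ℕ) : ℕ :=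
  sSup {b | ∃ B : Finset (Finset (Fin v)),
    IsPacking v k B ∧ MaxPPCSize B ρ ∧ B.card = b}

/-- The packing number `D(v,k)`. -/
noncomputable def packingNumber (v k : ℕ) : ℕ :=
  sSup {b | ∃ B : Finset (Finset (Fin v)), IsPacking v k B ∧ B.card = b}

/-!
Fix a maximum partial parallel class `P` and let `Q` be the `kρ` points it covers. A block outside
`P` cannot miss `Q` (it would extend `P`). Blocks meeting `Q` twice contain a pair of `Q` not
covered by `P`, and distinct blocks contain distinct pairs, so there are at most
`C(kρ,2) - ρ C(k,2) = k² C(ρ,2)` of them. The remaining blocks meet `Q` in a single point, lying in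
some `p ∈ P`. If all those attached to `p` go through the same point, their parts outside `Q` are
disjoint `(k-1)`-sets, so there are at most `(v - kρ)/(k-1)` of them. Otherwise two blocks attached
at different points of `p` must meet, since exchanging `p` for both would enlarge `P`; so each of
the `k` points of `p` carries at most `k - 1` attached blocks, one through each point outside `Q`
of a block attached elsewhere.
-/

open Finset

theorem Finset.card_sdiff_of_inter_eq_singleton {α : Type*} [DecidableEq α] {b Q : Finset α}
    {k : ℕ} {x : α} (hb : #b = k) (h : b ∩ Q = {x}) : #(b \ Q) = k - 1 := by
  rw [card_sdiff, inter_comm Q b, h, card_singleton, hb]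

theorem Nat.choose_two_mul (k ρ : ℕ) :
    (k * ρ).choose 2 = ρ * k.choose 2 + k ^ 2 * ρ.choose 2 := by
  have h : ((k * ρ).choose 2 : ℚ) = ρ * k.choose 2 + k ^ 2 * ρ.choose 2 := by
    push_cast [Nat.cast_choose_two]
    ring
  exact_mod_cast h

def IsMaximumPPC {v : ℕ} (B P : Finset (Finset (Fin v))) : Prop :=
  IsPPC B P ∧ ∀ P', IsPPC B P' → #P' ≤ #P

section Packing

variable {v k : ℕ} {B P : Finset (Finset (Fin v))}

theorem IsPacking.eq_of_two_le_card_inter (hB : IsPacking v k B) {b₁ b₂ : Finset (Fin v)}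
    (hb₁ : b₁ ∈ B) (hb₂ : b₂ ∈ B) (h : 2 ≤ #(b₁ ∩ b₂)) : b₁ = b₂ := by
  by_contra hne
  have := hB.2 b₁ hb₁ b₂ hb₂ hne
  omega

theorem IsPacking.eq_of_mem_of_mem (hB : IsPacking v k B) {b₁ b₂ : Finset (Fin v)}
    (hb₁ : b₁ ∈ B) (hb₂ : b₂ ∈ B) {x y : Fin v} (hxy : x ≠ y)
    (hx₁ : x ∈ b₁) (hy₁ : y ∈ b₁) (hx₂ : x ∈ b₂) (hy₂ : y ∈ b₂) : b₁ = b₂ :=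
  hB.eq_of_two_le_card_inter hb₁ hb₂ <|
    one_lt_card.2 ⟨x, mem_inter.2 ⟨hx₁, hx₂⟩, y, mem_inter.2 ⟨hy₁, hy₂⟩, hxy⟩

theorem IsPacking.card_mul_le_of_inter_eq_singleton (hB : IsPacking v k B)
    {S : Finset (Finset (Fin v))} (hSB : S ⊆ B) {Q : Finset (Fin v)} {x : Fin v}
    (hS : ∀ b ∈ S, b ∩ Q = {x}) : #S * (k - 1) ≤ v - #Q := by
  have hx : ∀ b ∈ S, x ∈ b ∧ x ∈ Q := fun b hb =>
    mem_inter.1 (by rw [hS b hb]; exact mem_singleton_self x)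
  have hdisj : (S : Set (Finset (Fin v))).PairwiseDisjoint (· \ Q) := by
    intro b hb b' hb' hne
    refine disjoint_left.2 fun z hz hz' => hne ?_
    rw [mem_sdiff] at hz hz'
    exact hB.eq_of_mem_of_mem (hSB hb) (hSB hb') (ne_of_mem_of_not_mem (hx b hb).2 hz.2)
      (hx b hb).1 hz.1 (hx b' hb').1 hz'.1
  calc #S * (k - 1) = #(S.biUnion (· \ Q)) := by
        rw [card_biUnion hdisj,
          sum_const_nat fun b hb => card_sdiff_of_inter_eq_singleton (hB.1 b (hSB hb)) (hS b hb)]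
    _ ≤ #Qᶜ := card_le_card <| biUnion_subset.2 fun b _ z hz => mem_compl.2 (mem_sdiff.1 hz).2
    _ = v - #Q := by rw [card_compl, Fintype.card_fin]

theorem IsPacking.card_le_of_forall_not_disjoint (hB : IsPacking v k B)
    {S : Finset (Finset (Fin v))} (hSB : S ⊆ B) {Q c : Finset (Fin v)} (hc : c ∈ B)
    {x y : Fin v} (hcQ : c ∩ Q = {y}) (hxy : x ≠ y)
    (hS : ∀ b ∈ S, b ∩ Q = {x} ∧ ¬Disjoint b c) : #S ≤ k - 1 := by
  have hx : ∀ b ∈ S, x ∈ b ∧ x ∈ Q := fun b hb =>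
    mem_inter.1 (by rw [(hS b hb).1]; exact mem_singleton_self x)
  rw [← card_sdiff_of_inter_eq_singleton (hB.1 c hc) hcQ]
  refine card_le_card_of_forall_subsingleton (fun b z => z ∈ b) (fun b hb => ?_) (fun z hz => ?_)
  · obtain ⟨z, hzb, hzc⟩ := not_disjoint_iff.1 (hS b hb).2
    refine ⟨z, mem_sdiff.2 ⟨hzc, fun hzQ => hxy ?_⟩, hzb⟩
    have hzx : z ∈ b ∩ Q := mem_inter.2 ⟨hzb, hzQ⟩
    have hzy : z ∈ c ∩ Q := mem_inter.2 ⟨hzc, hzQ⟩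
    rw [(hS b hb).1, mem_singleton] at hzx
    rw [hcQ, mem_singleton] at hzy
    rw [← hzx, hzy]
  · rintro b ⟨hb, hzb⟩ b' ⟨hb', hzb'⟩
    exact hB.eq_of_mem_of_mem (hSB hb) (hSB hb')
      (ne_of_mem_of_not_mem (hx b hb).2 (mem_sdiff.1 hz).2) (hx b hb).1 hzb (hx b' hb').1 hzb'

theorem IsPPC.subset {P' : Finset (Finset (Fin v))} (hP : IsPPC B P) (h : P' ⊆ P) :
    IsPPC B P' :=
  ⟨h.trans hP.1, fun b₁ h₁ b₂ h₂ => hP.2 b₁ (h h₁) b₂ (h h₂)⟩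

theorem IsPPC.insert {b : Finset (Fin v)} (hP : IsPPC B P) (hb : b ∈ B)
    (hdisj : ∀ q ∈ P, Disjoint b q) : IsPPC B (insert b P) := by
  have hpair : ((Insert.insert b P : Finset _) : Set (Finset (Fin v))).Pairwise Disjoint := by
    rw [coe_insert, Set.pairwise_insert_of_symm]
    exact ⟨hP.2, fun q hq _ => hdisj q hq⟩
  exact ⟨insert_subset hb hP.1, fun b₁ h₁ b₂ h₂ => hpair h₁ h₂⟩

theorem IsPPC.card_biUnion_id (hB : IsPacking v k B) (hP : IsPPC B P) :
    #(P.biUnion id) = k * #P := by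
  rw [card_biUnion (t := id) hP.2]
  exact (sum_const_nat fun q hq => hB.1 q (hP.1 hq)).trans (mul_comm _ _)

theorem IsPPC.card_biUnion_powersetCard_two (hB : IsPacking v k B) (hP : IsPPC B P) :
    #(P.biUnion (powersetCard 2)) = #P * k.choose 2 := by
  rw [card_biUnion, sum_const_nat fun q hq => by rw [card_powersetCard, hB.1 q (hP.1 hq)]]
  intro q hq q' hq' hne
  refine disjoint_left.2 fun s hs hs' => ?_
  rw [mem_powersetCard] at hs hs'
  obtain ⟨z, hz⟩ := card_pos.1 (by omega : 0 < #s)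
  exact disjoint_left.1 (hP.2 q hq q' hq' hne) (hs.1 hz) (hs'.1 hz)

theorem IsPPC.card_filter_two_le_inter_add_le (hB : IsPacking v k B) (hP : IsPPC B P)
    {Q : Finset (Fin v)} (hPQ : ∀ q ∈ P, q ⊆ Q) :
    #{b ∈ B \ P | 2 ≤ #(b ∩ Q)} + #P * k.choose 2 ≤ (#Q).choose 2 := by
  have hWQ : P.biUnion (powersetCard 2) ⊆ Q.powersetCard 2 :=
    biUnion_subset.2 fun q hq => powersetCard_mono (hPQ q hq)
  rw [← hP.card_biUnion_powersetCard_two hB, ← card_powersetCard,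
    ← card_sdiff_add_card_eq_card hWQ]
  refine Nat.add_le_add_right (card_le_card_of_forall_subsingleton (fun b e => e ⊆ b)
    (fun b hb => ?_) (fun e he => ?_)) _
  · obtain ⟨hbBP, h2⟩ := mem_filter.1 hb
    obtain ⟨hbB, hbP⟩ := mem_sdiff.1 hbBP
    obtain ⟨e, heb, he⟩ := exists_subset_card_eq h2
    refine ⟨e, mem_sdiff.2 ⟨mem_powersetCard.2 ⟨heb.trans inter_subset_right, he⟩, fun heW => ?_⟩,
      heb.trans inter_subset_left⟩
    obtain ⟨q, hq, heq⟩ := mem_biUnion.1 heW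
    have hbq := hB.eq_of_two_le_card_inter hbB (hP.1 hq) <|
      he.symm.trans_le (card_le_card (subset_inter (heb.trans inter_subset_left)
        (mem_powersetCard.1 heq).1))
    exact hbP (hbq ▸ hq)
  · rintro b ⟨hb, heb⟩ b' ⟨hb', heb'⟩
    have he2 := (mem_powersetCard.1 (mem_sdiff.1 he).1).2
    exact hB.eq_of_two_le_card_inter (mem_sdiff.1 (mem_filter.1 hb).1).1
      (mem_sdiff.1 (mem_filter.1 hb').1).1
      (he2.symm.trans_le (card_le_card (subset_inter heb heb')))

theorem IsPPC.disjoint_of_inter_eq_singleton (hP : IsPPC B P) {Q : Finset (Fin v)}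
    (hPQ : ∀ q ∈ P, q ⊆ Q) {p b : Finset (Fin v)} {x : Fin v} (hp : p ∈ P) (hx : x ∈ p)
    (hbQ : b ∩ Q = {x}) : ∀ q ∈ P.erase p, Disjoint b q := by
  intro q hq
  obtain ⟨hqp, hqP⟩ := mem_erase.1 hq
  refine disjoint_left.2 fun z hzb hzq => ?_
  have hzQ : z ∈ b ∩ Q := mem_inter.2 ⟨hzb, hPQ q hqP hzq⟩
  rw [hbQ, mem_singleton] at hzQ
  subst hzQ
  exact disjoint_left.1 (hP.2 p hp q hqP (Ne.symm hqp)) hx hzq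

theorem MaxPPCSize.exists_isMaximumPPC {ρ : ℕ} (h : MaxPPCSize B ρ) :
    ∃ P, IsMaximumPPC B P ∧ #P = ρ := by
  obtain ⟨⟨P, hP, rfl⟩, hmax⟩ := h
  exact ⟨P, ⟨hP, hmax⟩, rfl⟩

theorem IsMaximumPPC.exists_not_disjoint (hP : IsMaximumPPC B P) {b : Finset (Fin v)}
    (hb : b ∈ B \ P) : ∃ q ∈ P, ¬Disjoint b q := by
  by_contra! hdisj
  obtain ⟨hbB, hbP⟩ := mem_sdiff.1 hb
  have := hP.2 _ (hP.1.insert hbB hdisj)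
  rw [card_insert_of_notMem hbP] at this
  omega

theorem IsMaximumPPC.not_disjoint_of_exchange (hP : IsMaximumPPC B P) {p b b' : Finset (Fin v)}
    (hp : p ∈ P) (hb : b ∈ B \ P) (hb' : b' ∈ B \ P) (hne : b ≠ b')
    (hdb : ∀ q ∈ P.erase p, Disjoint b q) (hdb' : ∀ q ∈ P.erase p, Disjoint b' q) :
    ¬Disjoint b b' := by
  intro hbb'
  rw [mem_sdiff] at hb hb'
  have hPPC : IsPPC B (insert b (insert b' (P.erase p))) :=
    ((hP.1.subset (erase_subset p P)).insert hb'.1 hdb').insert hb.1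
      ((forall_mem_insert _ _ _).2 ⟨hbb', hdb⟩)
  have hcard := hP.2 _ hPPC
  have hbnot : b ∉ insert b' (P.erase p) := by
    rw [mem_insert, not_or]
    exact ⟨hne, fun h => hb.2 (mem_of_mem_erase h)⟩
  rw [card_insert_of_notMem hbnot, card_insert_of_notMem fun h => hb'.2 (mem_of_mem_erase h),
    card_erase_of_mem hp] at hcard
  have := card_pos.2 ⟨p, hp⟩
  omega

theorem IsMaximumPPC.card_attached_le (hk : 2 ≤ k) (hB : IsPacking v k B)
    (hP : IsMaximumPPC B P) {Q : Finset (Fin v)} (hPQ : ∀ q ∈ P, q ⊆ Q) {p : Finset (Fin v)}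
    (hp : p ∈ P) :
    #{b ∈ B \ P | ∃ x ∈ p, b ∩ Q = {x}} ≤ max (k * (k - 1)) ((v - #Q) / (k - 1)) := by
  set S := {b ∈ B \ P | ∃ x ∈ p, b ∩ Q = {x}}
  have hSB : S ⊆ B := fun b hb => (mem_sdiff.1 (mem_filter.1 hb).1).1
  by_cases hcommon : ∃ x, ∀ b ∈ S, b ∩ Q = {x}
  · obtain ⟨x, hx⟩ := hcommon
    exact le_max_of_le_right <|
      (Nat.le_div_iff_mul_le (by omega)).2 (hB.card_mul_le_of_inter_eq_singleton hSB hx)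
  push Not at hcommon
  have hfiber : ∀ x ∈ p, #{b ∈ S | b ∩ Q = {x}} ≤ k - 1 := by
    intro x hx
    obtain ⟨c, hcS, hcx⟩ := hcommon x
    obtain ⟨hcBP, y, hyp, hcy⟩ := mem_filter.1 hcS
    have hxy : x ≠ y := by rintro rfl; exact hcx hcy
    refine hB.card_le_of_forall_not_disjoint ((filter_subset _ _).trans hSB) (hSB hcS) hcy hxy
      fun b hb => ?_
    obtain ⟨hbS, hbx⟩ := mem_filter.1 hb
    exact ⟨hbx, hP.not_disjoint_of_exchange hp (mem_filter.1 hbS).1 hcBP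
      (by rintro rfl; exact hcx hbx) (hP.1.disjoint_of_inter_eq_singleton hPQ hp hx hbx)
      (hP.1.disjoint_of_inter_eq_singleton hPQ hp hyp hcy)⟩
  have hcover : S ⊆ p.biUnion fun x => {b ∈ S | b ∩ Q = {x}} := fun b hb => by
    obtain ⟨-, x, hx, hbx⟩ := mem_filter.1 hb
    exact mem_biUnion.2 ⟨x, hx, mem_filter.2 ⟨hb, hbx⟩⟩
  refine le_max_of_le_left ?_
  calc #S ≤ ∑ x ∈ p, #{b ∈ S | b ∩ Q = {x}} := (card_le_card hcover).trans card_biUnion_le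
    _ ≤ ∑ _x ∈ p, (k - 1) := sum_le_sum hfiber
    _ = k * (k - 1) := by rw [sum_const, smul_eq_mul, hB.1 p (hP.1.1 hp)]

theorem IsMaximumPPC.card_le (hk : 2 ≤ k) (hB : IsPacking v k B) (hP : IsMaximumPPC B P) :
    #B ≤ #P + k ^ 2 * (#P).choose 2 + #P * max (k * (k - 1)) ((v - k * #P) / (k - 1)) := by
  set Q := P.biUnion id
  have hPQ : ∀ q ∈ P, q ⊆ Q := fun q hq => subset_biUnion_of_mem id hq
  have hQ : #Q = k * #P := hP.1.card_biUnion_id hB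
  have hpairs := hP.1.card_filter_two_le_inter_add_le hB hPQ
  rw [hQ, Nat.choose_two_mul] at hpairs
  have hattached : {b ∈ B \ P | ¬2 ≤ #(b ∩ Q)} ⊆
      P.biUnion fun p => {b ∈ B \ P | ∃ x ∈ p, b ∩ Q = {x}} := by
    intro b hb
    obtain ⟨hbBP, hb2⟩ := mem_filter.1 hb
    obtain ⟨q, hq, hbq⟩ := hP.exists_not_disjoint hbBP
    obtain ⟨z, hzb, hzq⟩ := not_disjoint_iff.1 hbq
    have hpos : 0 < #(b ∩ Q) := card_pos.2 ⟨z, mem_inter.2 ⟨hzb, hPQ q hq hzq⟩⟩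
    obtain ⟨x, hx⟩ := card_eq_one.1 (by omega : #(b ∩ Q) = 1)
    obtain ⟨p, hp, hxp⟩ := mem_biUnion.1 (mem_inter.1 (hx ▸ mem_singleton_self x)).2
    exact mem_biUnion.2 ⟨p, hp, mem_filter.2 ⟨hbBP, x, hxp, hx⟩⟩
  have hrest : #{b ∈ B \ P | ¬2 ≤ #(b ∩ Q)} ≤
      #P * max (k * (k - 1)) ((v - k * #P) / (k - 1)) :=
    calc _ ≤ ∑ p ∈ P, #{b ∈ B \ P | ∃ x ∈ p, b ∩ Q = {x}} :=
          (card_le_card hattached).trans card_biUnion_le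
      _ ≤ ∑ _p ∈ P, max (k * (k - 1)) ((v - #Q) / (k - 1)) :=
          sum_le_sum fun p hp => hP.card_attached_le hk hB hPQ hp
      _ = _ := by rw [sum_const, smul_eq_mul, hQ]
  have hsplit := card_filter_add_card_filter_not (s := B \ P) fun b => 2 ≤ #(b ∩ Q)
  have hBP := card_sdiff_add_card_eq_card hP.1.1
  omega

end Packing

theorem beta_le {ρ v k N : ℕ} (h : ∀ B, IsPacking v k B → MaxPPCSize B ρ → #B ≤ N) :
    beta ρ v k ≤ N :=
  csSup_le' fun _ ⟨B, hB, hρ, hcard⟩ => hcard ▸ h B hB hρ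

theorem stmt17_general (k ρ v : ℕ) (hk : 2 ≤ k) :
    (beta ρ v k : ℚ) ≤ (ρ : ℚ) * ((k : ℚ) ^ 2 * ((ρ : ℚ) - 1) / 2 + 1 +
      max ((k * (k - 1) : ℕ) : ℚ) (((v - k * ρ) / (k - 1) : ℕ) : ℚ)) := by
  set M := max (k * (k - 1)) ((v - k * ρ) / (k - 1)) with hM
  have hbeta : beta ρ v k ≤ ρ + k ^ 2 * ρ.choose 2 + ρ * M := beta_le fun B hB hρB => by
    obtain ⟨P, hP, rfl⟩ := hρB.exists_isMaximumPPC
    exact hP.card_le hk hB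
  calc (beta ρ v k : ℚ) ≤ ((ρ + k ^ 2 * ρ.choose 2 + ρ * M : ℕ) : ℚ) := by exact_mod_cast hbeta
    _ = _ := by
      rw [Nat.cast_add, Nat.cast_add, Nat.cast_mul, Nat.cast_mul, Nat.cast_pow,
        Nat.cast_choose_two, hM, Nat.cast_max]
      ring

theorem stmt17 (k ρ v : ℕ) (hk : 2 ≤ k) (hρ : 1 ≤ ρ) (hv : k * ρ ≤ v) :
    (beta ρ v k : ℚ) ≤ (ρ : ℚ) * ((k : ℚ) ^ 2 * ((ρ : ℚ) - 1) / 2 + 1 +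
      max ((k * (k - 1) : ℕ) : ℚ) (((v - k * ρ) / (k - 1) : ℕ) : ℚ)) :=
  stmt17_general k ρ v hk
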